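/- arXiv:2210.09600 — 3 statements merged into one kernel-verified Lean document; each statement's English description precedes it below -/
import Mathlib

section
/- Let d ≥ 2, k > 2, and let b₂ : [−1,1] → [0,∞) be measurable and even with ‖b₂‖ := ∫_{S^{d−1}} b₂(e·ω) dω < ∞. Suppose α ∈ [0, ‖b₂‖] satisfies ∫_{S^{d−1}} b₂(û·ω)(⟨v'⟩^k + ⟨v₁'⟩^k) dω ≤ α (⟨v⟩² + ⟨v₁⟩²)^{k/2} for all v ≠ v₁ in ℝ^d. Define K(v,v₁) = ∫_{S^{d−1}} b₂(û·ω)(⟨v'⟩^k + ⟨v₁'⟩^k − ⟨v⟩^k − ⟨v₁⟩^k) dω. Then there exists a constant C_k > 1, depending only on k, and functions G̃, L̃ defined on pairs (v,v₁) with v ≠ v₁, such that K = G̃ − L̃, 0 ≤ G̃(v,v₁) ≤ α C_k ⟨v⟩⟨v₁⟩(⟨v⟩^{k−2} + ⟨v₁⟩^{k−2}), and L̃(v,v₁) ≥ (‖b₂‖ − α)(⟨v⟩^k + ⟨v₁⟩^k). -/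
/-!
Let `Γ(v, v₁) = ∫ b₂(û·ω)(⟨v'⟩^k + ⟨v₁'⟩^k) dω`, so that `K = Γ − ‖b₂‖(⟨v⟩^k + ⟨v₁⟩^k)`.
Take `G̃ = (Γ − α(⟨v⟩^k + ⟨v₁⟩^k))⁺` and `L̃ = G̃ − K`; the lower bound on `L̃` is then immediate.
For `G̃`, the hypothesis `Γ ≤ α(⟨v⟩² + ⟨v₁⟩²)^{k/2}` reduces everything to the elementary inequality
`(a² + b²)^{k/2} ≤ a^k + b^k + 2^{k/2} ab (a^{k−2} + b^{k−2})`, which for `b ≤ a` follows from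
convexity of `t ↦ t^{k/2}` on `[a², 2a²]` and `b² ≤ ab`.
-/

open MeasureTheory
open scoped RealInnerProductSpace

/-- The "Japanese bracket" `⟨v⟩ = √(1 + |v|²)`. -/
noncomputable def jap {d : ℕ} (v : EuclideanSpace ℝ (Fin d)) : ℝ := Real.sqrt (1 + ‖v‖ ^ 2)

/-- The surface measure on the unit sphere `S^{d−1} ⊂ ℝ^d`. -/
noncomputable def sphereMeasure (d : ℕ) :
    Measure (Metric.sphere (0 : EuclideanSpace ℝ (Fin d)) 1) :=
  (volume : Measure (EuclideanSpace ℝ (Fin d))).toSphere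

/-- `v' = v + ((v₁−v)·ω)ω`. -/
noncomputable def vPrime {d : ℕ} (v v₁ ω : EuclideanSpace ℝ (Fin d)) :
    EuclideanSpace ℝ (Fin d) := v + ⟪v₁ - v, ω⟫ • ω

/-- `v₁' = v₁ − ((v₁−v)·ω)ω`. -/
noncomputable def v1Prime {d : ℕ} (v v₁ ω : EuclideanSpace ℝ (Fin d)) :
    EuclideanSpace ℝ (Fin d) := v₁ - ⟪v₁ - v, ω⟫ • ω

namespace Real

theorem sq_rpow_half {x : ℝ} (hx : 0 ≤ x) (k : ℝ) : (x ^ 2) ^ (k / 2) = x ^ k := by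
  rw [← rpow_natCast_mul hx]
  norm_num [mul_div_cancel₀]

theorem add_rpow_le_of_le {p x y : ℝ} (hp : 1 ≤ p) (hy : 0 ≤ y) (hyx : y ≤ x) :
    (x + y) ^ p ≤ x ^ p + (2 ^ p - 1) * x ^ (p - 1) * y := by
  rcases (hy.trans hyx).eq_or_lt with rfl | hx
  · obtain rfl : y = 0 := le_antisymm hyx hy
    simp
  obtain ⟨t, rfl⟩ : ∃ t, y = t * x := ⟨y / x, (div_mul_cancel₀ y hx.ne').symm⟩
  have ht0 : 0 ≤ t := nonneg_of_mul_nonneg_left hy hx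
  have ht1 : t ≤ 1 := by nlinarith
  have hconv := (convexOn_rpow hp).2 (Set.mem_Ici.2 hx.le) (Set.mem_Ici.2 (by positivity : 0 ≤ 2 * x))
    (sub_nonneg.2 ht1) ht0 (sub_add_cancel 1 t)
  have hpt : (1 - t) * x + t * (2 * x) = x + t * x := by ring
  have hty : t * x ^ p = x ^ (p - 1) * (t * x) := by
    rw [rpow_sub_one hx.ne']; field_simp
  simp only [smul_eq_mul] at hconv
  rw [hpt, mul_rpow zero_le_two hx.le] at hconv
  linear_combination hconv + (2 ^ p - 1) * hty

theorem sq_add_sq_rpow_le_of_le {k a b : ℝ} (hk : 2 ≤ k) (hb : 0 ≤ b) (hba : b ≤ a) :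
    (a ^ 2 + b ^ 2) ^ (k / 2) ≤
      a ^ k + b ^ k + 2 ^ (k / 2) * (a * b) * (a ^ (k - 2) + b ^ (k - 2)) := by
  have ha : 0 ≤ a := hb.trans hba
  have h := add_rpow_le_of_le (by linarith : 1 ≤ k / 2) (sq_nonneg b) (pow_le_pow_left₀ hb hba 2)
  rw [sq_rpow_half ha, show k / 2 - 1 = (k - 2) / 2 by ring, sq_rpow_half ha] at h
  have hb2 : b ^ 2 ≤ a * b := by nlinarith
  have hC : (0 : ℝ) ≤ 2 ^ (k / 2) := by positivity
  have hak : 0 ≤ a ^ (k - 2) := by positivity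
  nlinarith [rpow_nonneg hb k, mul_nonneg (mul_nonneg hC (mul_nonneg ha hb)) (rpow_nonneg hb (k - 2)),
    mul_le_mul_of_nonneg_left hb2 hak, mul_nonneg hak (mul_nonneg ha hb)]

theorem sq_add_sq_rpow_le {k a b : ℝ} (hk : 2 ≤ k) (ha : 0 ≤ a) (hb : 0 ≤ b) :
    (a ^ 2 + b ^ 2) ^ (k / 2) ≤
      a ^ k + b ^ k + 2 ^ (k / 2) * (a * b) * (a ^ (k - 2) + b ^ (k - 2)) := by
  rcases le_total b a with hba | hab
  · exact sq_add_sq_rpow_le_of_le hk hb hba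
  · have h := sq_add_sq_rpow_le_of_le hk ha hab
    rwa [add_comm (b ^ 2), mul_comm b a, add_comm (b ^ k), add_comm (b ^ (k - 2))] at h

end Real

theorem MeasureTheory.Integrable.mul_continuous_of_compactSpace {X : Type*} [TopologicalSpace X]
    [CompactSpace X] [MeasurableSpace X] [OpensMeasurableSpace X] {μ : Measure X} {f g : X → ℝ}
    (hf : Integrable f μ) (hg : Continuous g) : Integrable (fun x => f x * g x) μ := by
  obtain ⟨C, hC⟩ := isCompact_univ.exists_bound_of_continuousOn hg.continuousOn
  exact hf.mul_bdd hg.aestronglyMeasurable (ae_of_all _ fun x => hC x (Set.mem_univ x))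

section Collision

variable {d : ℕ}

theorem one_le_jap (v : EuclideanSpace ℝ (Fin d)) : 1 ≤ jap v :=
  Real.one_le_sqrt.2 (le_add_of_nonneg_right (sq_nonneg _))

theorem continuous_jap : Continuous (jap : EuclideanSpace ℝ (Fin d) → ℝ) := by
  unfold jap; fun_prop

noncomputable def gainIntegral (b₂ : ℝ → ℝ) (k : ℝ) (v v₁ : EuclideanSpace ℝ (Fin d)) : ℝ :=
  ∫ ω : Metric.sphere (0 : EuclideanSpace ℝ (Fin d)) 1,
    b₂ ⟪‖v₁ - v‖⁻¹ • (v₁ - v), (ω : EuclideanSpace ℝ (Fin d))⟫ *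
      (jap (vPrime v v₁ (ω : EuclideanSpace ℝ (Fin d))) ^ k +
        jap (v1Prime v v₁ (ω : EuclideanSpace ℝ (Fin d))) ^ k) ∂(sphereMeasure d)

theorem integral_collision_eq_gainIntegral_sub {b₂ : ℝ → ℝ} (k : ℝ)
    {v v₁ : EuclideanSpace ℝ (Fin d)}
    (hint : Integrable (fun ω : Metric.sphere (0 : EuclideanSpace ℝ (Fin d)) 1 =>
      b₂ ⟪‖v₁ - v‖⁻¹ • (v₁ - v), (ω : EuclideanSpace ℝ (Fin d))⟫) (sphereMeasure d)) :
    (∫ ω : Metric.sphere (0 : EuclideanSpace ℝ (Fin d)) 1,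
        b₂ ⟪‖v₁ - v‖⁻¹ • (v₁ - v), (ω : EuclideanSpace ℝ (Fin d))⟫ *
          (jap (vPrime v v₁ (ω : EuclideanSpace ℝ (Fin d))) ^ k +
            jap (v1Prime v v₁ (ω : EuclideanSpace ℝ (Fin d))) ^ k -
            jap v ^ k - jap v₁ ^ k) ∂(sphereMeasure d)) =
      gainIntegral b₂ k v v₁ -
        (∫ ω : Metric.sphere (0 : EuclideanSpace ℝ (Fin d)) 1,
          b₂ ⟪‖v₁ - v‖⁻¹ • (v₁ - v), (ω : EuclideanSpace ℝ (Fin d))⟫ ∂(sphereMeasure d)) *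
          (jap v ^ k + jap v₁ ^ k) := by
  have hjap_rpow : ∀ w : EuclideanSpace ℝ (Fin d) → EuclideanSpace ℝ (Fin d), Continuous w →
      Continuous fun ω : Metric.sphere (0 : EuclideanSpace ℝ (Fin d)) 1 => jap (w ω) ^ k :=
    fun w hw => ((continuous_jap.comp hw).comp continuous_subtype_val).rpow_const
      fun _ => Or.inl (zero_lt_one.trans_le (one_le_jap _)).ne'
  have hgain := hint.mul_continuous_of_compactSpace
    ((hjap_rpow (vPrime v v₁) (by unfold vPrime; fun_prop)).add
      (hjap_rpow (v1Prime v v₁) (by unfold v1Prime; fun_prop)))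
  simp only [Pi.add_apply] at hgain
  rw [gainIntegral, ← integral_mul_const, ← integral_sub hgain (hint.mul_const _)]
  congr 1 with ω
  ring

end Collision

/-- modified binary gain/loss decomposition: for any `k > 2` there is a constant
`C_k > 1`, depending only on `k`, such that whenever `d ≥ 2`, `b₂` is an even nonnegative angular
kernel with finite cutoff `‖b₂‖`, and `α ∈ [0, ‖b₂‖]` satisfies the Povzner-type averaging bound
of order `k`, the quantity
`K(v,v₁) = ∫_{S^{d−1}} b₂(û·ω)(⟨v'⟩^k + ⟨v₁'⟩^k − ⟨v⟩^k − ⟨v₁⟩^k) dω`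
decomposes as `K = G̃ − L̃` with
`0 ≤ G̃ ≤ α C_k ⟨v⟩⟨v₁⟩(⟨v⟩^{k−2} + ⟨v₁⟩^{k−2})` and
`L̃ ≥ (‖b₂‖ − α)(⟨v⟩^k + ⟨v₁⟩^k)` for all `v ≠ v₁`. -/
theorem binary_modified_decomposition (k : ℝ) (hk : 2 < k) :
    ∃ Ck : ℝ, 1 < Ck ∧
      ∀ (d : ℕ), 2 ≤ d →
      ∀ (b₂ : ℝ → ℝ), Measurable b₂ →
        (∀ x ∈ Set.Icc (-1 : ℝ) 1, 0 ≤ b₂ x) →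
        (∀ x ∈ Set.Icc (-1 : ℝ) 1, b₂ (-x) = b₂ x) →
      ∀ normb₂ : ℝ,
        (∀ e : EuclideanSpace ℝ (Fin d), ‖e‖ = 1 →
          (∫ ω : Metric.sphere (0 : EuclideanSpace ℝ (Fin d)) 1,
              b₂ ⟪e, (ω : EuclideanSpace ℝ (Fin d))⟫ ∂(sphereMeasure d)) = normb₂) →
        (∀ e : EuclideanSpace ℝ (Fin d), ‖e‖ = 1 →
          Integrable (fun ω : Metric.sphere (0 : EuclideanSpace ℝ (Fin d)) 1 =>
            b₂ ⟪e, (ω : EuclideanSpace ℝ (Fin d))⟫) (sphereMeasure d)) →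
      ∀ α : ℝ, α ∈ Set.Icc 0 normb₂ →
        (∀ v v₁ : EuclideanSpace ℝ (Fin d), v ≠ v₁ →
          (∫ ω : Metric.sphere (0 : EuclideanSpace ℝ (Fin d)) 1,
              b₂ ⟪‖v₁ - v‖⁻¹ • (v₁ - v), (ω : EuclideanSpace ℝ (Fin d))⟫ *
                (jap (vPrime v v₁ (ω : EuclideanSpace ℝ (Fin d))) ^ k +
                  jap (v1Prime v v₁ (ω : EuclideanSpace ℝ (Fin d))) ^ k)
            ∂(sphereMeasure d)) ≤ α * (jap v ^ 2 + jap v₁ ^ 2) ^ (k / 2)) →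
      ∃ G L : EuclideanSpace ℝ (Fin d) → EuclideanSpace ℝ (Fin d) → ℝ,
        ∀ v v₁ : EuclideanSpace ℝ (Fin d), v ≠ v₁ →
          ((∫ ω : Metric.sphere (0 : EuclideanSpace ℝ (Fin d)) 1,
              b₂ ⟪‖v₁ - v‖⁻¹ • (v₁ - v), (ω : EuclideanSpace ℝ (Fin d))⟫ *
                (jap (vPrime v v₁ (ω : EuclideanSpace ℝ (Fin d))) ^ k +
                  jap (v1Prime v v₁ (ω : EuclideanSpace ℝ (Fin d))) ^ k -
                  jap v ^ k - jap v₁ ^ k)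
            ∂(sphereMeasure d)) = G v v₁ - L v v₁) ∧
          0 ≤ G v v₁ ∧
          G v v₁ ≤ α * Ck * (jap v * jap v₁) * (jap v ^ (k - 2) + jap v₁ ^ (k - 2)) ∧
          (normb₂ - α) * (jap v ^ k + jap v₁ ^ k) ≤ L v v₁ := by
  refine ⟨2 ^ (k / 2), Real.one_lt_rpow one_lt_two (by linarith), ?_⟩
  intro d _ b₂ _ _ _ normb₂ hnorm hint α hα hPovzner
  refine ⟨fun v v₁ => max (gainIntegral b₂ k v v₁ - α * (jap v ^ k + jap v₁ ^ k)) 0,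
    fun v v₁ => max (gainIntegral b₂ k v v₁ - α * (jap v ^ k + jap v₁ ^ k)) 0 -
      gainIntegral b₂ k v v₁ + normb₂ * (jap v ^ k + jap v₁ ^ k), fun v v₁ hne => ?_⟩
  have hu : ‖‖v₁ - v‖⁻¹ • (v₁ - v)‖ = 1 := norm_smul_inv_norm (sub_ne_zero.2 hne.symm)
  have hjap : 0 ≤ jap v := zero_le_one.trans (one_le_jap v)
  have hjap₁ : 0 ≤ jap v₁ := zero_le_one.trans (one_le_jap v₁)
  have hgain : gainIntegral b₂ k v v₁ ≤ α * (jap v ^ k + jap v₁ ^ k) +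
      α * 2 ^ (k / 2) * (jap v * jap v₁) * (jap v ^ (k - 2) + jap v₁ ^ (k - 2)) := by
    calc gainIntegral b₂ k v v₁ ≤ α * (jap v ^ 2 + jap v₁ ^ 2) ^ (k / 2) := hPovzner v v₁ hne
      _ ≤ α * (jap v ^ k + jap v₁ ^ k +
            2 ^ (k / 2) * (jap v * jap v₁) * (jap v ^ (k - 2) + jap v₁ ^ (k - 2))) :=
        mul_le_mul_of_nonneg_left (Real.sq_add_sq_rpow_le hk.le hjap hjap₁) hα.1
      _ = _ := by ring
  have hbound_nonneg :
      0 ≤ α * 2 ^ (k / 2) * (jap v * jap v₁) * (jap v ^ (k - 2) + jap v₁ ^ (k - 2)) := by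
    have := hα.1
    positivity
  refine ⟨by rw [integral_collision_eq_gainIntegral_sub k (hint _ hu), hnorm _ hu]; ring,
    le_max_right _ _, max_le (by linarith) hbound_nonneg, ?_⟩
  linarith [le_max_left (gainIntegral b₂ k v v₁ - α * (jap v ^ k + jap v₁ ^ k)) 0]
end

section
/- Let p > 1 be a real number. Then for all real x, y > 0 one has (x+y)^p − x^p − y^p ≤ C_{2,p} (x^{p−1} y + x y^{p−1}), where C_{2,p} = p · max{1, 2^{p−3}}. -/
open intervalIntegral Real

lemma aux_sub (r : ℝ) (hr : 0 ≤ r) (hr1 : r ≤ 1) {a b : ℝ} (ha : 0 ≤ a) (hb : 0 ≤ b) :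
    (a + b) ^ r ≤ a ^ r + b ^ r := by
  have h := NNReal.coe_le_coe.2 (NNReal.rpow_add_le_add_rpow a.toNNReal b.toNNReal hr hr1)
  push_cast at h
  rwa [Real.coe_toNNReal a ha, Real.coe_toNNReal b hb] at h

lemma aux_mul (r : ℝ) (hr : 1 ≤ r) {a b : ℝ} (ha : 0 ≤ a) (hb : 0 ≤ b) :
    (a + b) ^ r ≤ 2 ^ (r - 1) * (a ^ r + b ^ r) := by
  have h := NNReal.coe_le_coe.2
    (NNReal.rpow_add_le_mul_rpow_add_rpow a.toNNReal b.toNNReal hr)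
  push_cast at h
  rwa [Real.coe_toNNReal a ha, Real.coe_toNNReal b hb] at h

lemma aux_neg (r : ℝ) (hr : r ≤ 0) {a b : ℝ} (ha : 0 ≤ a) (hb : 0 ≤ b) :
    (a + b) ^ r ≤ a ^ r + b ^ r := by
  rcases eq_or_lt_of_le ha with rfl | ha'
  · rcases eq_or_lt_of_le hb with rfl | hb'
    · rcases eq_or_lt_of_le hr with rfl | hr'
      · norm_num
      · rw [add_zero, Real.zero_rpow (ne_of_lt hr')]
        norm_num
    · rw [zero_add]
      nlinarith [Real.rpow_nonneg ha r]
  · have h1 : (a + b) ^ r ≤ a ^ r :=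
      Real.rpow_le_rpow_of_nonpos ha' (by linarith) hr
    nlinarith [Real.rpow_nonneg hb r]

lemma auxA (p : ℝ) (hp : 1 < p) {u s : ℝ} (hu : 0 ≤ u) (hs : 0 ≤ s) :
    (u + s) ^ (p - 2) ≤ max 1 ((2:ℝ) ^ (p - 3)) * (u ^ (p - 2) + s ^ (p - 2)) := by
  have hM1 : (1:ℝ) ≤ max 1 ((2:ℝ) ^ (p - 3)) := le_max_left _ _
  have hnn : 0 ≤ u ^ (p-2) + s ^ (p-2) := by positivity
  rcases le_total p 2 with h2 | h2
  · have := aux_neg (p - 2) (by linarith) hu hs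
    nlinarith
  · rcases le_total p 3 with h3 | h3
    · have := aux_sub (p - 2) (by linarith) (by linarith) hu hs
      nlinarith
    · have h := aux_mul (p - 2) (by linarith) hu hs
      have h2p : (2:ℝ) ^ (p - 2 - 1) ≤ max 1 ((2:ℝ) ^ (p - 3)) := by
        have : p - 2 - 1 = p - 3 := by ring
        rw [this]; exact le_max_right _ _
      nlinarith [Real.rpow_nonneg (by positivity : (0:ℝ) ≤ u + s) (p-2)]

/-- For real `p > 1` and all real `x, y > 0`,
`(x+y)^p − x^p − y^p ≤ C_{2,p} (x^{p−1} y + x y^{p−1})` with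
`C_{2,p} = p · max{1, 2^{p−3}}`. All powers are real powers. -/
theorem binomial_power_estimate (p : ℝ) (hp : 1 < p) (x y : ℝ) (hx : 0 < x) (hy : 0 < y) :
    (x + y) ^ p - x ^ p - y ^ p ≤
      p * max 1 ((2 : ℝ) ^ (p - 3)) * (x ^ (p - 1) * y + x * y ^ (p - 1)) := by
  set M := max 1 ((2:ℝ) ^ (p - 3)) with hM
  have hM1 : (1:ℝ) ≤ M := le_max_left _ _
  have hp0 : 0 < p := by linarith
  have hp1 : 0 < p - 1 := by linarith
  -- Step 1: pointwise bound for the first difference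
  have step1 : ∀ s : ℝ, 0 ≤ s →
      (x + s) ^ (p - 1) - s ^ (p - 1) ≤ M * (x ^ (p - 1) + (p - 1) * x * s ^ (p - 2)) := by
    intro s hs
    have hInt1 : ∫ u in (0:ℝ)..x, (u + s) ^ (p - 2) =
        ((x + s) ^ (p - 1) - s ^ (p - 1)) / (p - 1) := by
      rw [intervalIntegral.integral_comp_add_right (fun t => t ^ (p - 2)) s,
        integral_rpow (Or.inl (by linarith : (-1:ℝ) < p - 2))]
      rw [show p - 2 + 1 = p - 1 by ring, zero_add]
    have hInt2 : ∫ u in (0:ℝ)..x, (M * (u ^ (p - 2) + s ^ (p - 2))) =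
        M * (x ^ (p - 1) / (p - 1) + x * s ^ (p - 2)) := by
      rw [intervalIntegral.integral_const_mul]
      rw [intervalIntegral.integral_add (intervalIntegral.intervalIntegrable_rpow'
        (by linarith)) (intervalIntegrable_const)]
      rw [integral_rpow (Or.inl (by linarith : (-1:ℝ) < p - 2))]
      rw [intervalIntegral.integral_const]
      rw [show p - 2 + 1 = p - 1 by ring, Real.zero_rpow (by linarith : p - 1 ≠ 0)]
      rw [smul_eq_mul]
      ring
    have hIle : (∫ u in (0:ℝ)..x, (u + s) ^ (p - 2)) ≤
        ∫ u in (0:ℝ)..x, (M * (u ^ (p - 2) + s ^ (p - 2))) := by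
      apply intervalIntegral.integral_mono_on hx.le
      · have : IntervalIntegrable (fun t : ℝ => t ^ (p - 2)) MeasureTheory.volume s (x + s) :=
          intervalIntegral.intervalIntegrable_rpow' (by linarith)
        have := this.comp_add_right s
        simpa using this
      · exact (((intervalIntegral.intervalIntegrable_rpow' (by linarith :
          (-1:ℝ) < p - 2)).add intervalIntegrable_const).const_mul M)
      · intro u hu
        exact auxA p hp hu.1 hs
    rw [hInt1, hInt2] at hIle
    rw [div_le_iff₀ hp1] at hIle
    have hx1 : x ^ (p - 1) / (p - 1) * (p - 1) = x ^ (p - 1) :=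
      div_mul_cancel₀ _ hp1.ne'
    calc (x + s) ^ (p - 1) - s ^ (p - 1)
        ≤ M * (x ^ (p - 1) / (p - 1) + x * s ^ (p - 2)) * (p - 1) := hIle
      _ = M * (x ^ (p - 1) / (p - 1) * (p - 1) + (p - 1) * x * s ^ (p - 2)) := by ring
      _ = M * (x ^ (p - 1) + (p - 1) * x * s ^ (p - 2)) := by rw [hx1]
  -- Step 2
  have hInt1 : ∫ s in (0:ℝ)..y, ((x + s) ^ (p - 1) - s ^ (p - 1)) =
      ((x + y) ^ p - x ^ p) / p - y ^ p / p := by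
    have i1 : IntervalIntegrable (fun s : ℝ => (x + s) ^ (p - 1))
        MeasureTheory.volume 0 y := by
      have : IntervalIntegrable (fun t : ℝ => t ^ (p - 1)) MeasureTheory.volume x (y + x) :=
        intervalIntegral.intervalIntegrable_rpow' (by linarith)
      have := this.comp_add_right x
      simp only [add_sub_cancel_right, sub_self] at this
      simpa [add_comm] using this
    have i2 : IntervalIntegrable (fun s : ℝ => s ^ (p - 1)) MeasureTheory.volume 0 y :=
      intervalIntegral.intervalIntegrable_rpow' (by linarith)
    rw [intervalIntegral.integral_sub i1 i2]
    have e1 : ∫ s in (0:ℝ)..y, (x + s) ^ (p - 1) = ((x + y) ^ p - x ^ p) / p := by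
      rw [intervalIntegral.integral_comp_add_left (fun t => t ^ (p - 1)) x,
        integral_rpow (Or.inl (by linarith : (-1:ℝ) < p - 1))]
      rw [show p - 1 + 1 = p by ring, add_zero]
    have e2 : ∫ s in (0:ℝ)..y, s ^ (p - 1) = y ^ p / p := by
      rw [integral_rpow (Or.inl (by linarith : (-1:ℝ) < p - 1))]
      rw [show p - 1 + 1 = p by ring, Real.zero_rpow (by linarith : p ≠ 0)]
      ring
    rw [e1, e2]
  have hInt2 : ∫ s in (0:ℝ)..y, (M * (x ^ (p - 1) + (p - 1) * x * s ^ (p - 2))) =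
      M * (x ^ (p - 1) * y + x * y ^ (p - 1)) := by
    rw [intervalIntegral.integral_const_mul]
    rw [intervalIntegral.integral_add intervalIntegrable_const
      (((intervalIntegral.intervalIntegrable_rpow' (by linarith :
        (-1:ℝ) < p - 2)).const_mul _))]
    rw [intervalIntegral.integral_const_mul,
      integral_rpow (Or.inl (by linarith : (-1:ℝ) < p - 2)),
      intervalIntegral.integral_const]
    rw [show p - 2 + 1 = p - 1 by ring, Real.zero_rpow (by linarith : p - 1 ≠ 0),
      smul_eq_mul]
    field_simp
    ring
  have hIle : (∫ s in (0:ℝ)..y, ((x + s) ^ (p - 1) - s ^ (p - 1))) ≤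
      ∫ s in (0:ℝ)..y, (M * (x ^ (p - 1) + (p - 1) * x * s ^ (p - 2))) := by
    apply intervalIntegral.integral_mono_on hy.le
    · have i1 : IntervalIntegrable (fun s : ℝ => (x + s) ^ (p - 1))
          MeasureTheory.volume 0 y := by
        have : IntervalIntegrable (fun t : ℝ => t ^ (p - 1)) MeasureTheory.volume x (y + x) :=
          intervalIntegral.intervalIntegrable_rpow' (by linarith)
        have := this.comp_add_right x
        simp only [add_sub_cancel_right, sub_self] at this
        simpa [add_comm] using this
      exact i1.sub (intervalIntegral.intervalIntegrable_rpow' (by linarith))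
    · exact ((_root_.intervalIntegrable_const).add
        ((intervalIntegral.intervalIntegrable_rpow' (by linarith :
          (-1:ℝ) < p - 2)).const_mul _)).const_mul M
    · intro s hs
      exact step1 s hs.1
  rw [hInt1, hInt2] at hIle
  have := mul_le_mul_of_nonneg_left hIle hp0.le
  calc (x + y) ^ p - x ^ p - y ^ p
      = p * (((x + y) ^ p - x ^ p) / p - y ^ p / p) := by field_simp
    _ ≤ p * (M * (x ^ (p - 1) * y + x * y ^ (p - 1))) := this
    _ = p * M * (x ^ (p - 1) * y + x * y ^ (p - 1)) := by ring
end

section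
/- Let v, v₁, v₂ ∈ ℝ^d and set |ũ| = (|v−v₁|² + |v−v₂|² + |v₁−v₂|²)^{1/2}. (i) For every real γ ≥ 0, |ũ|^γ ≤ 2^γ · max{1, 3^{γ−1}} (⟨v⟩^γ + ⟨v₁⟩^γ + ⟨v₂⟩^γ). (ii) For every real γ ∈ [0,2] and every permutation (π₀, π₁, π₂) of (v, v₁, v₂), |ũ|^γ ≥ (2/3)^{γ/2} ⟨π₀⟩^γ − ⟨π₁⟩^γ − ⟨π₂⟩^γ. -/
lemma sqrt_rpow' (x γ : ℝ) (hx : 0 ≤ x) : Real.sqrt x ^ γ = x ^ (γ / 2) := by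
  rw [Real.sqrt_eq_rpow, ← Real.rpow_mul hx]
  congr 1; ring

lemma rpow_add_le_add_rpow' {a b : ℝ} (ha : 0 ≤ a) (hb : 0 ≤ b) {p : ℝ}
    (hp : 0 ≤ p) (hp1 : p ≤ 1) : (a + b) ^ p ≤ a ^ p + b ^ p := by
  lift a to NNReal using ha
  lift b to NNReal using hb
  exact_mod_cast NNReal.rpow_add_le_add_rpow a b hp hp1

lemma rpow_add3_le {a b c : ℝ} (ha : 0 ≤ a) (hb : 0 ≤ b) (hc : 0 ≤ c) {p : ℝ}
    (hp : 0 ≤ p) (hp1 : p ≤ 1) : (a + b + c) ^ p ≤ a ^ p + b ^ p + c ^ p := by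
  calc (a + b + c) ^ p ≤ (a + b) ^ p + c ^ p :=
        rpow_add_le_add_rpow' (by linarith) hc hp hp1
    _ ≤ a ^ p + b ^ p + c ^ p := by
        have := rpow_add_le_add_rpow' ha hb hp hp1; linarith

lemma rpow_add3_le' {a b c : ℝ} (ha : 0 ≤ a) (hb : 0 ≤ b) (hc : 0 ≤ c) {p : ℝ}
    (hp1 : 1 ≤ p) : (a + b + c) ^ p ≤ 3 ^ (p - 1) * (a ^ p + b ^ p + c ^ p) := by
  have h := Real.rpow_arith_mean_le_arith_mean_rpow (Finset.univ : Finset (Fin 3))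
    (fun _ => (1 : ℝ) / 3) ![a, b, c] (fun i _ => by norm_num)
    (by norm_num [Fin.sum_univ_three])
    (fun i _ => by fin_cases i <;> simpa) hp1
  simp only [Fin.sum_univ_three, Matrix.cons_val_zero, Matrix.cons_val_one, Matrix.head_cons,
    Matrix.cons_val_two, Matrix.tail_cons] at h
  have h' : ((a + b + c) / 3) ^ p ≤ (a ^ p + b ^ p + c ^ p) / 3 := by
    calc ((a + b + c) / 3) ^ p = (1/3 * a + 1/3 * b + 1/3 * c) ^ p := by ring_nf
      _ ≤ 1/3 * a ^ p + 1/3 * b ^ p + 1/3 * c ^ p := h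
      _ = (a ^ p + b ^ p + c ^ p) / 3 := by ring
  have h3 : (a + b + c) ^ p = 3 ^ p * ((a + b + c) / 3) ^ p := by
    rw [← Real.mul_rpow (by norm_num) (by positivity)]
    congr 1; ring
  have h3p : (3 : ℝ) ^ (p - 1) = 3 ^ p / 3 := by
    rw [Real.rpow_sub (by norm_num), Real.rpow_one]
  have hpos : (0:ℝ) < 3 ^ p := Real.rpow_pos_of_pos (by norm_num) p
  rw [h3, h3p]
  calc 3 ^ p * ((a + b + c) / 3) ^ p ≤ 3 ^ p * ((a ^ p + b ^ p + c ^ p) / 3) := by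
        exact mul_le_mul_of_nonneg_left h' hpos.le
    _ = 3 ^ p / 3 * (a ^ p + b ^ p + c ^ p) := by ring

/-- Key lemma for part (ii). -/
lemma key2 {p S A B C : ℝ} (hp0 : 0 ≤ p) (hp1 : p ≤ 1)
    (hS : 0 ≤ S) (hA : 0 ≤ A) (hB : 0 ≤ B) (hC : 0 ≤ C)
    (h : 2 / 3 * A ≤ S + B + C) :
    (2/3 : ℝ) ^ p * A ^ p - B ^ p - C ^ p ≤ S ^ p := by
  have h1 : (2/3 : ℝ) ^ p * A ^ p = (2/3 * A) ^ p := by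
    rw [Real.mul_rpow (by norm_num) hA]
  have h2 : (2/3 * A) ^ p ≤ (S + B + C) ^ p :=
    Real.rpow_le_rpow (by positivity) h hp0
  have h3 := rpow_add3_le hS hB hC hp0 hp1
  linarith [h1 ▸ (h2.trans h3)]

/-- `|ũ| = (|v−v₁|² + |v−v₂|² + |v₁−v₂|²)^{1/2}`. -/
noncomputable def utilde {d : ℕ} (v v₁ v₂ : EuclideanSpace ℝ (Fin d)) : ℝ :=
  Real.sqrt (‖v - v₁‖ ^ 2 + ‖v - v₂‖ ^ 2 + ‖v₁ - v₂‖ ^ 2)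

set_option maxHeartbeats 1000000 in
/-- bounds on the ternary potential `|ũ|^γ`.
(i) For every real `γ ≥ 0`, `|ũ|^γ ≤ 2^γ · max{1, 3^{γ−1}} (⟨v⟩^γ + ⟨v₁⟩^γ + ⟨v₂⟩^γ)`.
(ii) For every real `γ ∈ [0,2]` and every permutation `(π₀,π₁,π₂)` of `(v,v₁,v₂)`,
`|ũ|^γ ≥ (2/3)^{γ/2} ⟨π₀⟩^γ − ⟨π₁⟩^γ − ⟨π₂⟩^γ`. -/
theorem ternary_potential_bounds {d : ℕ} (v v₁ v₂ : EuclideanSpace ℝ (Fin d)) :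
    (∀ γ : ℝ, 0 ≤ γ →
      utilde v v₁ v₂ ^ γ ≤
        (2 : ℝ) ^ γ * max 1 ((3 : ℝ) ^ (γ - 1)) * (jap v ^ γ + jap v₁ ^ γ + jap v₂ ^ γ)) ∧
    (∀ γ : ℝ, γ ∈ Set.Icc (0 : ℝ) 2 →
      ((2 / 3 : ℝ) ^ (γ / 2) * jap v ^ γ - jap v₁ ^ γ - jap v₂ ^ γ ≤ utilde v v₁ v₂ ^ γ ∧
       (2 / 3 : ℝ) ^ (γ / 2) * jap v₁ ^ γ - jap v ^ γ - jap v₂ ^ γ ≤ utilde v v₁ v₂ ^ γ ∧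
       (2 / 3 : ℝ) ^ (γ / 2) * jap v₂ ^ γ - jap v ^ γ - jap v₁ ^ γ ≤ utilde v v₁ v₂ ^ γ)) := by

  set A := 1 + ‖v‖ ^ 2 with hAdef
  set B := 1 + ‖v₁‖ ^ 2 with hBdef
  set C := 1 + ‖v₂‖ ^ 2 with hCdef
  set S := ‖v - v₁‖ ^ 2 + ‖v - v₂‖ ^ 2 + ‖v₁ - v₂‖ ^ 2 with hSdef
  have hA : (0:ℝ) ≤ A := by positivity
  have hB : (0:ℝ) ≤ B := by positivity
  have hC : (0:ℝ) ≤ C := by positivity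
  have hS : (0:ℝ) ≤ S := by positivity
  have hjapA : ∀ γ : ℝ, jap v ^ γ = A ^ (γ / 2) := fun γ => sqrt_rpow' A γ hA
  have hjapB : ∀ γ : ℝ, jap v₁ ^ γ = B ^ (γ / 2) := fun γ => sqrt_rpow' B γ hB
  have hjapC : ∀ γ : ℝ, jap v₂ ^ γ = C ^ (γ / 2) := fun γ => sqrt_rpow' C γ hC
  have hut : ∀ γ : ℝ, utilde v v₁ v₂ ^ γ = S ^ (γ / 2) := fun γ => sqrt_rpow' S γ hS
  -- triangle-type inequalities
  have tri : ∀ x y : EuclideanSpace ℝ (Fin d), ‖x - y‖ ^ 2 ≤ 2 * ‖x‖ ^ 2 + 2 * ‖y‖ ^ 2 := by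
    intro x y
    have h1 : ‖x - y‖ ≤ ‖x‖ + ‖y‖ := norm_sub_le x y
    have h2 : ‖x - y‖ ^ 2 ≤ (‖x‖ + ‖y‖) ^ 2 := pow_le_pow_left₀ (norm_nonneg _) h1 2
    nlinarith [sq_nonneg (‖x‖ - ‖y‖)]
  have tri2 : ∀ x y : EuclideanSpace ℝ (Fin d), ‖x‖ ^ 2 ≤ 2 * ‖x - y‖ ^ 2 + 2 * ‖y‖ ^ 2 := by
    intro x y
    have h1 : ‖x‖ ≤ ‖x - y‖ + ‖y‖ := by simpa using norm_add_le (x - y) y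
    have h2 : ‖x‖ ^ 2 ≤ (‖x - y‖ + ‖y‖) ^ 2 := pow_le_pow_left₀ (norm_nonneg _) h1 2
    nlinarith [sq_nonneg (‖x - y‖ - ‖y‖)]
  constructor
  · -- part (i)
    intro γ hγ
    have hmax1 : (1:ℝ) ≤ max 1 ((3:ℝ) ^ (γ - 1)) := le_max_left _ _
    have hSle : S ≤ 4 * (A + B + C) := by
      have h1 := tri v v₁
      have h2 := tri v v₂
      have h3 := tri v₁ v₂
      simp only [hAdef, hBdef, hCdef, hSdef]
      nlinarith
    have h4g : (4:ℝ) ^ (γ/2) = 2 ^ γ := by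
      have h42 : (4:ℝ) = (2:ℝ) ^ (2:ℝ) := by
        rw [show ((2:ℝ)) = ((2:ℕ):ℝ) from by norm_num] ; rw [Real.rpow_natCast] ; norm_num
      rw [h42, ← Real.rpow_mul (by norm_num : (0:ℝ) ≤ 2)]
      congr 1 ; ring
    have step1 : S ^ (γ / 2) ≤ (2:ℝ) ^ γ * (A + B + C) ^ (γ / 2) := by
      have h := Real.rpow_le_rpow hS hSle (by positivity : (0:ℝ) ≤ γ / 2)
      rwa [Real.mul_rpow (by norm_num : (0:ℝ) ≤ 4) (by positivity), h4g] at h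
    have step2 : (A + B + C) ^ (γ / 2) ≤
        max 1 ((3:ℝ) ^ (γ - 1)) * (A ^ (γ/2) + B ^ (γ/2) + C ^ (γ/2)) := by
      have hsum : (0:ℝ) ≤ A ^ (γ/2) + B ^ (γ/2) + C ^ (γ/2) := by positivity
      rcases le_or_gt (γ / 2) 1 with h1 | h1
      · calc (A + B + C) ^ (γ / 2) ≤ A ^ (γ/2) + B ^ (γ/2) + C ^ (γ/2) :=
            rpow_add3_le hA hB hC (by positivity) h1
          _ ≤ max 1 ((3:ℝ) ^ (γ - 1)) * (A ^ (γ/2) + B ^ (γ/2) + C ^ (γ/2)) := by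
            nlinarith
      · have h2 := rpow_add3_le' hA hB hC h1.le
        have h3 : (3:ℝ) ^ (γ / 2 - 1) ≤ (3:ℝ) ^ (γ - 1) :=
          Real.rpow_le_rpow_of_exponent_le (by norm_num) (by linarith)
        have h4 : (3:ℝ) ^ (γ - 1) ≤ max 1 ((3:ℝ) ^ (γ - 1)) := le_max_right _ _
        nlinarith [Real.rpow_pos_of_pos (show (0:ℝ) < 3 by norm_num) (γ/2 - 1)]
    rw [hut, hjapA, hjapB, hjapC]
    calc S ^ (γ / 2) ≤ (2:ℝ) ^ γ * (A + B + C) ^ (γ / 2) := step1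
      _ ≤ (2:ℝ) ^ γ * (max 1 ((3:ℝ) ^ (γ - 1)) * (A ^ (γ/2) + B ^ (γ/2) + C ^ (γ/2))) := by
          have h2 : (0:ℝ) < (2:ℝ) ^ γ := Real.rpow_pos_of_pos (by norm_num) γ
          exact mul_le_mul_of_nonneg_left step2 h2.le
      _ = (2:ℝ) ^ γ * max 1 ((3:ℝ) ^ (γ - 1)) * (A ^ (γ/2) + B ^ (γ/2) + C ^ (γ/2)) := by ring
  · -- part (ii)
    intro γ hγ
    obtain ⟨hγ0, hγ2⟩ := hγ
    have hp0 : (0:ℝ) ≤ γ / 2 := by linarith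
    have hp1 : γ / 2 ≤ 1 := by linarith
    have h23 : ((2:ℝ)/3) ^ (γ/2) = ((2/3 : ℝ)) ^ (γ/2) := rfl
    rw [hut, hjapA, hjapB, hjapC]
    refine ⟨?_, ?_, ?_⟩
    · refine key2 hp0 hp1 hS hA hB hC ?_
      have h1 := tri2 v v₁
      have h2 := tri2 v v₂
      simp only [hAdef, hBdef, hCdef, hSdef]
      linarith [sq_nonneg ‖v₁ - v₂‖]
    · refine key2 hp0 hp1 hS hB hA hC ?_
      have h1 := tri2 v₁ v
      have h2 := tri2 v₁ v₂
      have h3 : ‖v₁ - v‖ = ‖v - v₁‖ := norm_sub_rev _ _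
      simp only [hAdef, hBdef, hCdef, hSdef]
      rw [h3] at h1
      linarith [sq_nonneg ‖v - v₂‖]
    · refine key2 hp0 hp1 hS hC hA hB ?_
      have h1 := tri2 v₂ v
      have h2 := tri2 v₂ v₁
      have h3 : ‖v₂ - v‖ = ‖v - v₂‖ := norm_sub_rev _ _
      have h4 : ‖v₂ - v₁‖ = ‖v₁ - v₂‖ := norm_sub_rev _ _
      simp only [hAdef, hBdef, hCdef, hSdef]
      rw [h3] at h1
      rw [h4] at h2
      linarith [sq_nonneg ‖v - v₁‖]
end
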